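/- Fix an integer N > 2, set κ_N = (−1)^{1+N/2} if N is even and fix κ_N ∈ {−1,+1} if N is odd. Let θ_1,…,θ_N be the N distinct N-th roots of κ_N, J = {ℓ : Re θ_ℓ > 0}, K = {ℓ : Re θ_ℓ < 0}, and B_k = ∏_{ℓ∈K∖{k}} θ_ℓ/(θ_ℓ − θ_k) for k ∈ K. Then Σ_{k∈K} B_k θ_k^{−#J} = (−1)^{#J}, where #J is the cardinality of J. -/

import Mathlib

/-!
The `θ_k`, `k ∈ K`, are distinct, so interpolating `X ^ #K - ∏_{ℓ ∈ K} (X - θ_ℓ)` (degree `< #K`)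
at them and evaluating at `0` gives `∑_{k ∈ K} B_k θ_k ^ #K = -∏_{ℓ ∈ K} (-θ_ℓ)`; since
`#J + #K = N`, `θ_k ^ (-#J) = θ_k ^ #K / κ`.

The `θ_ℓ` are exactly the roots of `X ^ N - κ`, and the choice of `κ_N` makes none of them
purely imaginary (such a root has `θ² = -1`), so `J` and `K` partition the roots. As `κ` is real,
conjugation permutes the roots in `J`; they have modulus one and the only real one is `1`, so
`∏_{ℓ ∈ J} θ_ℓ = 1`. The constant coefficient gives `∏_ℓ (-θ_ℓ) = -κ`, hence
`∏_{ℓ ∈ K} (-θ_ℓ) = -κ (-1) ^ #J`, and `K ≠ ∅` because the roots sum to zero (`N ≥ 2`).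
-/

open Finset Complex Polynomial ComplexConjugate

theorem zpow_neg_eq_pow_mul_inv {G₀ : Type*} [CommGroupWithZero G₀] {z a : G₀} {m n : ℕ}
    (hz0 : z ≠ 0) (hz : z ^ (m + n) = a) : z ^ (-(m : ℤ)) = z ^ n * a⁻¹ := by
  rw [← hz, zpow_neg, zpow_natCast, pow_add, mul_inv, mul_left_comm,
    mul_inv_cancel₀ (pow_ne_zero n hz0), mul_one]

namespace Lagrange

section interpolation

variable {F ι : Type*} [Field F] [DecidableEq ι] {s : Finset ι} {v : ι → F}

theorem eval_zero_basis (i : ι) :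
    (Lagrange.basis s v i).eval 0 = ∏ j ∈ s.erase i, v j / (v j - v i) := by
  rw [Lagrange.basis, eval_prod]
  refine prod_congr rfl fun j _ => ?_
  rw [basisDivisor, eval_mul, eval_C, eval_sub, eval_X, eval_C, zero_sub, ← neg_sub (v j),
    inv_neg]
  ring

theorem sum_prod_div_sub_mul_pow_card (hvs : Set.InjOn v s) (hs : s.Nonempty) :
    ∑ i ∈ s, (∏ j ∈ s.erase i, v j / (v j - v i)) * v i ^ #s = -∏ i ∈ s, -v i := by
  set f : F[X] := X ^ #s - nodal s v
  have hf : f.degree < #s := by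
    refine (degree_sub_lt_left ?_ (pow_ne_zero _ X_ne_zero) ?_).trans_eq (degree_X_pow _) <;>
      simp [degree_nodal, (nodal_monic (s := s) (v := v)).leadingCoeff]
  have := congrArg (eval 0) (eq_interpolate hvs hf)
  rw [interpolate_apply, eval_finsetSum] at this
  calc ∑ i ∈ s, (∏ j ∈ s.erase i, v j / (v j - v i)) * v i ^ #s
      = ∑ i ∈ s, eval 0 (C (f.eval (v i)) * Lagrange.basis s v i) :=
        sum_congr rfl fun i hi => by
          rw [eval_mul, eval_C, eval_zero_basis, mul_comm]
          simp [f, eval_nodal_at_node hi]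
    _ = -∏ i ∈ s, -v i := by
        rw [← this]
        simp [f, eval_nodal, zero_pow (card_ne_zero.2 hs)]

end interpolation

section nodal

variable {R ι : Type*} [CommRing R] {s : Finset ι} {v : ι → R}

theorem nodal_eq_of_isRoot [IsDomain R] {p : R[X]} (hp : p.Monic) (hdeg : p.natDegree ≤ #s)
    (hvs : Set.InjOn v s) (hroot : ∀ i ∈ s, p.IsRoot (v i)) : nodal s v = p := by
  refine (eq_of_monic_of_dvd_of_natDegree_le nodal_monic hp ?_ (by rwa [natDegree_nodal])).symm
  have hnodup : (s.val.map v).Nodup := s.nodup.map_on fun i hi j hj => hvs hi hj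
  rw [show nodal s v = ((s.val.map v).map fun x => X - C x).prod by
      rw [Multiset.map_map]; rfl,
    Multiset.prod_X_sub_C_dvd_iff_le_roots hp.ne_zero, Multiset.le_iff_subset hnodup]
  rintro _ hx
  obtain ⟨i, hi, rfl⟩ := Multiset.mem_map.1 hx
  exact (mem_roots hp.ne_zero).2 (hroot i hi)

variable {n : ℕ} {a : R}

theorem sum_eq_zero_of_nodal_eq_X_pow_sub_C [Nontrivial R] (h : nodal s v = X ^ n - C a)
    (hn : 2 ≤ n) : ∑ i ∈ s, v i = 0 := by
  have := congrArg nextCoeff h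
  rw [nodal_eq, prod_X_sub_C_nextCoeff,
    nextCoeff_of_natDegree_pos (by rw [natDegree_X_pow_sub_C]; omega),
    natDegree_X_pow_sub_C] at this
  simpa [coeff_X_pow, coeff_C, show n - 1 ≠ n by omega, show n - 1 ≠ 0 by omega] using this

theorem prod_neg_eq_of_nodal_eq_X_pow_sub_C (h : nodal s v = X ^ n - C a) (hn : n ≠ 0) :
    ∏ i ∈ s, -v i = -a := by
  simpa [eval_nodal, zero_pow hn] using congrArg (eval 0) h

theorem pow_eq_of_nodal_eq_X_pow_sub_C (h : nodal s v = X ^ n - C a) {i : ι} (hi : i ∈ s) :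
    v i ^ n = a := by
  simpa [eval_nodal_at_node hi, sub_eq_zero, eq_comm] using congrArg (eval (v i)) h

theorem exists_eq_of_nodal_eq_X_pow_sub_C [IsDomain R] (h : nodal s v = X ^ n - C a) {z : R}
    (hz : z ^ n = a) : ∃ i ∈ s, v i = z := by
  have := congrArg (eval z) h
  simp only [eval_nodal, eval_sub, eval_pow, eval_X, eval_C, hz, sub_self,
    prod_eq_zero_iff, sub_eq_zero] at this
  obtain ⟨i, hi, hzi⟩ := this
  exact ⟨i, hi, hzi.symm⟩

end nodal
end Lagrange

namespace Complex

theorem sq_eq_neg_one_of_norm_eq_one_of_re_eq_zero {z : ℂ} (hz : ‖z‖ = 1) (hre : z.re = 0) :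
    z ^ 2 = -1 := by
  have hconj : conj z = -z := Complex.ext (by simp [hre]) (by simp)
  have := mul_conj z
  rw [normSq_eq_norm_sq, hz, hconj] at this
  push_cast at this
  linear_combination -this

theorem prod_eq_one_of_conj_mem {s : Finset ℂ} (hconj : ∀ z ∈ s, conj z ∈ s)
    (hnorm : ∀ z ∈ s, ‖z‖ = 1) (hneg : -1 ∉ s) : ∏ z ∈ s, z = 1 := by
  refine prod_involution (fun z _ => conj z) (fun z hz => ?_) (fun z hz hz1 hfix => ?_) hconj
    (fun z _ => conj_conj z)
  · rw [mul_conj, normSq_eq_norm_sq, hnorm z hz]; norm_num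
  · have hreal : (z.re : ℂ) = z := conj_eq_iff_re.1 hfix
    have : |z.re| = 1 := by rw [← hnorm z hz, ← hreal, norm_real, Real.norm_eq_abs, ofReal_re]
    rcases abs_eq zero_le_one |>.1 this with h | h <;> rw [h] at hreal
    · exact hz1 (by simpa using hreal.symm)
    · exact hneg (by simpa [← hreal] using hz)

theorem exists_re_neg_of_sum_eq_zero {ι : Type*} [Fintype ι] [Nonempty ι] {θ : ι → ℂ}
    (hsum : ∑ i, θ i = 0) (hre : ∀ i, (θ i).re ≠ 0) : ∃ i, (θ i).re < 0 := by
  by_contra! hnonneg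
  have := congrArg re hsum
  rw [re_sum, zero_re] at this
  exact (sum_pos (fun i _ => (hnonneg i).lt_of_ne' (hre i)) univ_nonempty).ne' this

theorem prod_filter_re_pos_eq_one {ι : Type*} [Fintype ι] {θ : ι → ℂ} {N : ℕ} {κ : ℂ}
    (hθ : Function.Injective θ) (hnodal : Lagrange.nodal univ θ = X ^ N - C κ)
    (hκ : conj κ = κ) (hnorm : ∀ i, ‖θ i‖ = 1) : ∏ i with 0 < (θ i).re, θ i = 1 := by
  classical
  rw [← prod_image (f := fun z => z) hθ.injOn]
  refine prod_eq_one_of_conj_mem ?_ ?_ ?_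
  · simp only [mem_image, mem_filter, mem_univ, true_and]
    rintro _ ⟨i, hi, rfl⟩
    have hroot : conj (θ i) ^ N = κ := by
      rw [← map_pow, Lagrange.pow_eq_of_nodal_eq_X_pow_sub_C hnodal (mem_univ i), hκ]
    obtain ⟨j, -, hj⟩ := Lagrange.exists_eq_of_nodal_eq_X_pow_sub_C hnodal hroot
    exact ⟨j, by simpa [hj] using hi, hj⟩
  · simp only [mem_image]
    rintro _ ⟨i, -, rfl⟩
    exact hnorm i
  · simp only [mem_image, mem_filter, mem_univ, true_and, not_exists, not_and]
    intro i hi h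
    rw [h] at hi
    norm_num at hi

end Complex

theorem re_ne_zero_of_pow_eq {N : ℕ} {κ z : ℂ} (hκeven : Even N → κ = (-1) ^ (1 + N / 2))
    (hκ : κ ^ 2 = 1) (hz : z ^ N = κ) (hnorm : ‖z‖ = 1) : z.re ≠ 0 := by
  intro hre
  have hsq := sq_eq_neg_one_of_norm_eq_one_of_re_eq_zero hnorm hre
  rcases Nat.even_or_odd' N with ⟨n, rfl | rfl⟩
  · rw [hκeven (even_two_mul n), pow_mul, hsq, Nat.mul_div_cancel_left n two_pos, pow_add] at hz
    exact (pow_ne_zero n (neg_ne_zero.2 one_ne_zero) : (-1 : ℂ) ^ n ≠ 0)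
      (by linear_combination hz / 2)
  · rw [← hz, ← pow_mul, mul_comm, pow_mul, hsq, Odd.neg_one_pow ⟨n, rfl⟩] at hκ
    norm_num at hκ

/-- With `θ_1,…,θ_N` the `N` distinct `N`-th roots of `κ_N`,
`J = {ℓ : Re θ_ℓ > 0}`, `K = {ℓ : Re θ_ℓ < 0}` and
`B_k = ∏_{ℓ∈K∖{k}} θ_ℓ/(θ_ℓ − θ_k)`, one has `Σ_{k∈K} B_k θ_k^{−#J} = (−1)^{#J}`. -/
theorem beta_neg_cardJ (N : ℕ) (hN : 2 < N) (κ : ℂ)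
    (hκeven : Even N → κ = (-1 : ℂ) ^ (1 + N / 2))
    (hκodd : ¬ Even N → κ = 1 ∨ κ = -1)
    (θ : Fin N → ℂ) (hinj : Function.Injective θ) (hroot : ∀ i, θ i ^ N = κ) :
    ∑ k ∈ Finset.univ.filter (fun i => (θ i).re < 0),
        (∏ ℓ ∈ (Finset.univ.filter (fun i => (θ i).re < 0)).erase k,
            θ ℓ / (θ ℓ - θ k)) *
          θ k ^ (-((Finset.univ.filter (fun i => 0 < (θ i).re)).card : ℤ))
      = (-1 : ℂ) ^ ((Finset.univ.filter (fun i => 0 < (θ i).re)).card) := by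
  classical
  set J := univ.filter fun i => 0 < (θ i).re
  set K := univ.filter fun i => (θ i).re < 0
  have hκ : κ = 1 ∨ κ = -1 := by
    by_cases hE : Even N
    · exact hκeven hE ▸ neg_one_pow_eq_or ℂ _
    · exact hκodd hE
  have hκ0 : κ ≠ 0 := by rcases hκ with rfl | rfl <;> norm_num
  have hκsq : κ ^ 2 = 1 := by rcases hκ with rfl | rfl <;> norm_num
  have hκreal : conj κ = κ := by rcases hκ with rfl | rfl <;> simp
  have hnodal : Lagrange.nodal univ θ = X ^ N - C κ :=
    Lagrange.nodal_eq_of_isRoot (monic_X_pow_sub_C κ (by omega)) (by simp) hinj.injOn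
      fun i _ => by simp [hroot i]
  have hnorm i : ‖θ i‖ = 1 :=
    norm_eq_one_of_pow_eq_one (by rw [pow_mul, hroot i, hκsq]) (by omega : N * 2 ≠ 0)
  have hre i : (θ i).re ≠ 0 := re_ne_zero_of_pow_eq hκeven hκsq (hroot i) (hnorm i)
  have hK : K = univ.filter fun i => ¬ 0 < (θ i).re :=
    filter_congr fun i _ => by rw [not_lt, (hre i).le_iff_lt]
  have hcard : #J + #K = N := by
    rw [hK, card_filter_add_card_filter_not, card_univ, Fintype.card_fin]
  have hKne : K.Nonempty := by
    have : Nonempty (Fin N) := ⟨⟨0, by omega⟩⟩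
    simpa [K, filter_nonempty_iff] using exists_re_neg_of_sum_eq_zero
      (Lagrange.sum_eq_zero_of_nodal_eq_X_pow_sub_C hnodal hN.le) hre
  have hprodK : (-1) ^ #J * ∏ i ∈ K, -θ i = -κ := by
    rw [show (-1) ^ #J = ∏ i ∈ J, -θ i by
        rw [prod_neg, prod_filter_re_pos_eq_one hinj hnodal hκreal hnorm, mul_one],
      hK, prod_filter_mul_prod_filter_not,
      Lagrange.prod_neg_eq_of_nodal_eq_X_pow_sub_C hnodal (by omega)]
  have hpow k : θ k ^ (-(#J : ℤ)) = θ k ^ #K * κ⁻¹ :=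
    zpow_neg_eq_pow_mul_inv (norm_ne_zero_iff.1 (by simp [hnorm k])) (by rw [hcard, hroot k])
  have hsq : ((-1 : ℂ) ^ #J) ^ 2 = 1 := by rw [← pow_mul, pow_mul', neg_one_sq, one_pow]
  simp only [hpow, ← mul_assoc, ← sum_mul,
    Lagrange.sum_prod_div_sub_mul_pow_card hinj.injOn hKne]
  rw [← div_eq_mul_inv, div_eq_iff hκ0]
  linear_combination (-(-1) ^ #J) * hprodK + (∏ i ∈ K, -θ i) * hsq
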